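/- (Signature comparison lemma) Let V and W be finite-dimensional graded real vector spaces with graded non-degenerate symmetric forms and Lefschetz operators satisfying hard Lefschetz. Suppose W is even or odd, gdim V = (v + v^{-1})·gdim W (so dim V^{-j} = dim W^{-j+1} + dim W^{-j-1} for all j), and W satisfies the Hodge-Riemann bilinear relations with the standard sign. Then V satisfies the Hodge-Riemann bilinear relations with the standard sign if and only if for all i ≥ 0 the signature of the Lefschetz form on the primitive subspace P^{-i+1} ⊆ W^{-i+1} equals the signature of the Lefschetz form on all of V^{-i} (with P^1 := 0 by convention). -/

import Mathlib

noncomputable def posIndex (V : Type) [AddCommGroup V] [Module ℝ V]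
    (B : V →ₗ[ℝ] V →ₗ[ℝ] ℝ) (S : Submodule ℝ V) : ℕ :=
  sSup {n : ℕ | ∃ T : Submodule ℝ V, T ≤ S ∧ Module.finrank ℝ T = n ∧
    ∀ x ∈ T, x ≠ 0 → 0 < B x x}

noncomputable def negIndex (V : Type) [AddCommGroup V] [Module ℝ V]
    (B : V →ₗ[ℝ] V →ₗ[ℝ] ℝ) (S : Submodule ℝ V) : ℕ :=
  sSup {n : ℕ | ∃ T : Submodule ℝ V, T ≤ S ∧ Module.finrank ℝ T = n ∧
    ∀ x ∈ T, x ≠ 0 → B x x < 0}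

/-- The signature of the bilinear form `B` restricted to the subspace `S`. -/
noncomputable def signature (V : Type) [AddCommGroup V] [Module ℝ V]
    (B : V →ₗ[ℝ] V →ₗ[ℝ] ℝ) (S : Submodule ℝ V) : ℤ :=
  (posIndex V B S : ℤ) - (negIndex V B S : ℤ)

/-!
Hard Lefschetz gives the Lefschetz decomposition `X^{-i} = P^{-i} ⊕ L X^{-i-2}`, which is
orthogonal for the Lefschetz form `(x, y) ↦ B x (L^i y)`, and `L` carries the form on `X^{-i-2}`
isometrically to the one on `L X^{-i-2}`. Hence `σ i = τ i + σ (i + 2)`, where `σ i` and `τ i` are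
the signatures on `V^{-i}` and `P_V^{-i}`; likewise for dimensions, which together with
`gdim V = (v + v⁻¹) gdim W` gives `dim P_V^{-i} = dim P_W^{-i+1} + dim P_W^{-i-1}`
(with `P_W^1 = 0`).

Hodge–Riemann for `V` says `τ i = ε i · dim P_V^{-i}` with `ε (i + 2) = -ε i`, and Hodge–Riemann
for `W` says the signature `s i` on `P_W^{-i+1}` is `ε i · dim P_W^{-i+1}`. So Hodge–Riemann for `V`
reads `τ i = s i - s (i + 2)`, and since `σ` and `s` both vanish in degrees below `-(ℓ + 1)`, the
recursion for `σ` makes this equivalent to `σ = s`.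
-/

open Module

theorem LinearMap.finrank_map_of_injOn {K M N : Type*} [Field K] [AddCommGroup M] [Module K M]
    [AddCommGroup N] [Module K N] (f : M →ₗ[K] N) {S : Submodule K M}
    (hf : ∀ x ∈ S, f x = 0 → x = 0) : finrank K (S.map f) = finrank K S := by
  have hinj : Function.Injective (f.domRestrict S) := by
    rw [LinearMap.injective_domRestrict_iff, disjoint_iff, eq_bot_iff]
    rintro x ⟨hxS, hxf⟩
    exact (Submodule.mem_bot K).2 (hf x hxS hxf)
  rw [← LinearMap.range_domRestrict, LinearMap.finrank_range_of_inj hinj]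

theorem LinearMap.IsAdjointPair.pow {R M N : Type*} [CommSemiring R] [AddCommMonoid M]
    [Module R M] [AddCommMonoid N] [Module R N] {B : M →ₗ[R] M →ₗ[R] N} {f g : Module.End R M}
    (h : LinearMap.IsAdjointPair B B f g) (k : ℕ) :
    LinearMap.IsAdjointPair B B ⇑(f ^ k) ⇑(g ^ k) := by
  induction k with
  | zero => exact LinearMap.isAdjointPair_one
  | succ k ih => rw [pow_succ, pow_succ']; exact ih.mul h

theorem forall_eq_iff_forall_eq_of_add_two {G : Type*} [AddCommGroup G] {σ τ f c : ℕ → G}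
    (N : ℕ) (hσ : ∀ i, σ i = τ i + σ (i + 2)) (hf : ∀ i, f i = c i + f (i + 2))
    (hN : ∀ i, N ≤ i → σ i = f i) : (∀ i, τ i = c i) ↔ ∀ i, σ i = f i := by
  refine ⟨fun h i => ?_, fun h i => ?_⟩
  · -- `σ - f` is `2`-periodic and eventually zero.
    have hper : ∀ n, σ i - f i = σ (i + 2 * n) - f (i + 2 * n) := by
      intro n
      induction n with
      | zero => rfl
      | succ n ih => rw [ih, hσ, hf, h, mul_add, mul_one, ← add_assoc]; abel
    rw [← sub_eq_zero, hper N, hN _ (by omega), sub_self]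
  · have := hσ i
    rw [h i, h (i + 2), hf i] at this
    exact (add_right_cancel this).symm

theorem Int.negOnePow_add_two_ediv_two (n : ℤ) : ((n + 2) / 2).negOnePow = -(n / 2).negOnePow := by
  rw [show n + 2 = n + 1 * 2 by ring, Int.add_mul_ediv_right _ _ two_ne_zero, Int.negOnePow_succ]

section Signature

variable {V : Type} [AddCommGroup V] [Module ℝ V] (B : V →ₗ[ℝ] V →ₗ[ℝ] ℝ) (S : Submodule ℝ V)

theorem negIndex_eq_posIndex_neg : negIndex V B S = posIndex V (-B) S := by
  simp only [negIndex, posIndex, LinearMap.neg_apply, neg_pos]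

theorem signature_neg : signature V (-B) S = -signature V B S := by
  rw [signature, signature, negIndex_eq_posIndex_neg, negIndex_eq_posIndex_neg,
    show - -B = B from neg_neg B]
  ring

variable [FiniteDimensional ℝ V]

theorem bddAbove_finrank_posDef :
    BddAbove {n : ℕ | ∃ T : Submodule ℝ V, T ≤ S ∧ finrank ℝ T = n ∧
      ∀ x ∈ T, x ≠ 0 → 0 < B x x} :=
  ⟨finrank ℝ S, by rintro _ ⟨T, hTS, rfl, -⟩; exact Submodule.finrank_mono hTS⟩

theorem finrank_le_posIndex {T : Submodule ℝ V} (hTS : T ≤ S)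
    (hT : ∀ x ∈ T, x ≠ 0 → 0 < B x x) : finrank ℝ T ≤ posIndex V B S :=
  le_csSup (bddAbove_finrank_posDef B S) ⟨T, hTS, rfl, hT⟩

theorem exists_finrank_eq_posIndex :
    ∃ T ≤ S, finrank ℝ T = posIndex V B S ∧ ∀ x ∈ T, x ≠ 0 → 0 < B x x :=
  Nat.sSup_mem (s := {n : ℕ | ∃ T : Submodule ℝ V, T ≤ S ∧ finrank ℝ T = n ∧
    ∀ x ∈ T, x ≠ 0 → 0 < B x x}) ⟨0, ⊥, bot_le, finrank_bot ℝ V, by simp⟩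
    (bddAbove_finrank_posDef B S)

theorem posIndex_le_finrank : posIndex V B S ≤ finrank ℝ S := by
  obtain ⟨T, hTS, hT, -⟩ := exists_finrank_eq_posIndex B S
  exact hT ▸ Submodule.finrank_mono hTS

theorem posIndex_eq_finrank_iff :
    posIndex V B S = finrank ℝ S ↔ ∀ x ∈ S, x ≠ 0 → 0 < B x x := by
  refine ⟨fun h => ?_, fun h =>
    (posIndex_le_finrank B S).antisymm (finrank_le_posIndex B S le_rfl h)⟩
  obtain ⟨T, hTS, hT, hpos⟩ := exists_finrank_eq_posIndex B S
  rwa [Submodule.eq_of_le_of_finrank_eq hTS (hT.trans h)] at hpos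

theorem posIndex_eq_zero (h : ∀ x ∈ S, B x x ≤ 0) : posIndex V B S = 0 := by
  obtain ⟨T, hTS, hT, hpos⟩ := exists_finrank_eq_posIndex B S
  rw [← hT, Submodule.finrank_eq_zero, eq_bot_iff]
  intro x hx
  by_contra hx0
  exact (hpos x hx hx0).not_ge (h x (hTS hx))

theorem signature_eq_finrank_iff :
    signature V B S = finrank ℝ S ↔ ∀ x ∈ S, x ≠ 0 → 0 < B x x := by
  rw [← posIndex_eq_finrank_iff, signature]
  have := posIndex_le_finrank B S
  refine ⟨fun h => by omega, fun h => ?_⟩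
  rw [h, negIndex_eq_posIndex_neg, posIndex_eq_zero]
  · simp
  intro x hx
  rcases eq_or_ne x 0 with rfl | hx0
  · simp
  · simpa using ((posIndex_eq_finrank_iff B S).1 h x hx hx0).le

theorem signature_eq_units_mul_finrank_iff (u : ℤˣ) :
    signature V B S = u * finrank ℝ S ↔ ∀ x ∈ S, x ≠ 0 → 0 < ((u : ℤ) : ℝ) * B x x := by
  rcases Int.units_eq_one_or u with rfl | rfl
  · simpa using signature_eq_finrank_iff B S
  · simp only [Units.val_neg, Units.val_one, neg_mul, one_mul, Int.cast_neg, Int.cast_one]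
    rw [← neg_eq_iff_eq_neg, ← signature_neg, signature_eq_finrank_iff]
    rfl

theorem signature_bot : signature V B ⊥ = 0 := by
  have hpos := posIndex_le_finrank B ⊥
  have hneg := posIndex_le_finrank (-B) ⊥
  rw [finrank_bot] at hpos hneg
  simp [signature, negIndex_eq_posIndex_neg, Nat.le_zero.1 hpos, Nat.le_zero.1 hneg]

end Signature

section OrthogonalSum

variable {V : Type} [AddCommGroup V] [Module ℝ V] {B : V →ₗ[ℝ] V →ₗ[ℝ] ℝ}

theorem apply_add_add_of_apply_eq_zero (hsymm : ∀ x y : V, B x y = B y x) {a b : V}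
    (hab : B a b = 0) : B (a + b) (a + b) = B a a + B b b := by
  simp only [map_add, LinearMap.add_apply]
  rw [hsymm b a, hab]
  ring

variable [FiniteDimensional ℝ V]

theorem finrank_add_finrank_le_posIndex (hsymm : ∀ x y : V, B x y = B y x)
    {S T₁ T₂ : Submodule ℝ V} (hT₁S : T₁ ≤ S) (hT₂S : T₂ ≤ S)
    (hT₁ : ∀ x ∈ T₁, x ≠ 0 → 0 < B x x) (hT₂ : ∀ x ∈ T₂, x ≠ 0 → 0 < B x x)
    (horth : ∀ a ∈ T₁, ∀ b ∈ T₂, B a b = 0) :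
    finrank ℝ T₁ + finrank ℝ T₂ ≤ posIndex V B S := by
  have hnonneg : ∀ b ∈ T₂, 0 ≤ B b b := fun b hb => by
    rcases eq_or_ne b 0 with rfl | hb0
    · simp
    · exact (hT₂ b hb hb0).le
  have hsup : ∀ x ∈ T₁ ⊔ T₂, x ≠ 0 → 0 < B x x := by
    intro x hx hx0
    obtain ⟨a, ha, b, hb, rfl⟩ := Submodule.mem_sup.1 hx
    rw [apply_add_add_of_apply_eq_zero hsymm (horth a ha b hb)]
    rcases eq_or_ne a 0 with rfl | ha0
    · simpa using hT₂ b hb (by simpa using hx0)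
    · linarith [hT₁ a ha ha0, hnonneg b hb]
  have hdisj : T₁ ⊓ T₂ = ⊥ := eq_bot_iff.2 fun x ⟨hx₁, hx₂⟩ => by
    by_contra hx0
    exact (hT₁ x hx₁ hx0).ne' (horth x hx₁ x hx₂)
  have hdim := Submodule.finrank_sup_add_finrank_inf_eq T₁ T₂
  rw [hdisj, finrank_bot] at hdim
  have := finrank_le_posIndex B S (sup_le hT₁S hT₂S) hsup
  omega

/-- Take `U = S ∩ Tᗮ` for a maximal positive definite `T ≤ S`. -/
theorem exists_nonpos_finrank_le (hsymm : ∀ x y : V, B x y = B y x) (S : Submodule ℝ V) :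
    ∃ U ≤ S, (∀ x ∈ U, B x x ≤ 0) ∧ finrank ℝ S ≤ posIndex V B S + finrank ℝ U := by
  obtain ⟨T, hTS, hT, hpos⟩ := exists_finrank_eq_posIndex B S
  refine ⟨S ⊓ LinearMap.BilinForm.orthogonal B T, inf_le_left, ?_, ?_⟩
  · rintro y ⟨hyS, hyT⟩
    by_contra! hy
    have hline : ∀ x ∈ ℝ ∙ y, x ≠ 0 → 0 < B x x := by
      rintro _ hx hx0
      obtain ⟨c, rfl⟩ := Submodule.mem_span_singleton.1 hx
      have hc : c ≠ 0 := by rintro rfl; simp at hx0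
      simpa [mul_assoc] using mul_pos (mul_self_pos.2 hc) hy
    have hy0 : y ≠ 0 := by rintro rfl; simp at hy
    have := finrank_add_finrank_le_posIndex hsymm hTS
      ((Submodule.span_singleton_le_iff_mem y S).2 hyS) hpos hline fun a ha _ hb => by
        obtain ⟨c, rfl⟩ := Submodule.mem_span_singleton.1 hb
        simp [LinearMap.BilinForm.mem_orthogonal_iff.1 hyT a ha]
    rw [finrank_span_singleton hy0] at this
    omega
  · have h₁ := LinearMap.BilinForm.finrank_add_finrank_orthogonal' (B := B) T
    have h₂ := Submodule.finrank_sup_add_finrank_inf_eq S (LinearMap.BilinForm.orthogonal B T)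
    have h₃ := Submodule.finrank_le (S ⊔ LinearMap.BilinForm.orthogonal B T)
    omega

theorem posIndex_sup (hsymm : ∀ x y : V, B x y = B y x) {S₁ S₂ : Submodule ℝ V}
    (hdisj : S₁ ⊓ S₂ = ⊥) (horth : ∀ a ∈ S₁, ∀ b ∈ S₂, B a b = 0) :
    posIndex V B (S₁ ⊔ S₂) = posIndex V B S₁ + posIndex V B S₂ := by
  refine le_antisymm ?_ ?_
  · obtain ⟨T, hTS, hT, hpos⟩ := exists_finrank_eq_posIndex B (S₁ ⊔ S₂)
    obtain ⟨U₁, hU₁S, hU₁, hdim₁⟩ := exists_nonpos_finrank_le hsymm S₁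
    obtain ⟨U₂, hU₂S, hU₂, hdim₂⟩ := exists_nonpos_finrank_le hsymm S₂
    have hU : ∀ x ∈ U₁ ⊔ U₂, B x x ≤ 0 := by
      intro x hx
      obtain ⟨a, ha, b, hb, rfl⟩ := Submodule.mem_sup.1 hx
      rw [apply_add_add_of_apply_eq_zero hsymm (horth a (hU₁S ha) b (hU₂S hb))]
      linarith [hU₁ a ha, hU₂ b hb]
    have hTU : T ⊓ (U₁ ⊔ U₂) = ⊥ := eq_bot_iff.2 fun x ⟨hxT, hxU⟩ => by
      by_contra hx0
      exact (hpos x hxT hx0).not_ge (hU x hxU)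
    have hU₁U₂ : U₁ ⊓ U₂ = ⊥ := eq_bot_iff.2 (hdisj ▸ inf_le_inf hU₁S hU₂S)
    have e₁ := Submodule.finrank_sup_add_finrank_inf_eq T (U₁ ⊔ U₂)
    have e₂ := Submodule.finrank_sup_add_finrank_inf_eq U₁ U₂
    have e₃ := Submodule.finrank_sup_add_finrank_inf_eq S₁ S₂
    have e₄ := Submodule.finrank_mono
      (sup_le hTS (sup_le_sup hU₁S hU₂S) : T ⊔ (U₁ ⊔ U₂) ≤ S₁ ⊔ S₂)
    rw [hTU, finrank_bot] at e₁
    rw [hU₁U₂, finrank_bot] at e₂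
    omega
  · obtain ⟨T₁, hT₁S, hT₁, hpos₁⟩ := exists_finrank_eq_posIndex B S₁
    obtain ⟨T₂, hT₂S, hT₂, hpos₂⟩ := exists_finrank_eq_posIndex B S₂
    rw [← hT₁, ← hT₂]
    exact finrank_add_finrank_le_posIndex hsymm (hT₁S.trans le_sup_left)
      (hT₂S.trans le_sup_right) hpos₁ hpos₂ fun a ha b hb => horth a (hT₁S ha) b (hT₂S hb)

theorem signature_sup (hsymm : ∀ x y : V, B x y = B y x) {S₁ S₂ : Submodule ℝ V}
    (hdisj : S₁ ⊓ S₂ = ⊥) (horth : ∀ a ∈ S₁, ∀ b ∈ S₂, B a b = 0) :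
    signature V B (S₁ ⊔ S₂) = signature V B S₁ + signature V B S₂ := by
  have hsymm' : ∀ x y : V, (-B) x y = (-B) y x := fun x y => by simp [hsymm x y]
  have horth' : ∀ a ∈ S₁, ∀ b ∈ S₂, (-B) a b = 0 := fun a ha b hb => by simp [horth a ha b hb]
  simp only [signature, negIndex_eq_posIndex_neg, posIndex_sup hsymm hdisj horth,
    posIndex_sup hsymm' hdisj horth']
  push_cast
  ring

end OrthogonalSum

section Isometry

variable {V V' : Type} [AddCommGroup V] [Module ℝ V] [FiniteDimensional ℝ V]
  [AddCommGroup V'] [Module ℝ V'] [FiniteDimensional ℝ V']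
  {B : V →ₗ[ℝ] V →ₗ[ℝ] ℝ} {B' : V' →ₗ[ℝ] V' →ₗ[ℝ] ℝ} {f : V →ₗ[ℝ] V'} {S : Submodule ℝ V}

theorem posIndex_map (hinj : ∀ x ∈ S, f x = 0 → x = 0)
    (hf : ∀ x ∈ S, B' (f x) (f x) = B x x) : posIndex V' B' (S.map f) = posIndex V B S := by
  refine le_antisymm ?_ ?_
  · obtain ⟨T', hT'S, hT', hpos⟩ := exists_finrank_eq_posIndex B' (S.map f)
    have hmap : (S ⊓ T'.comap f).map f = T' := by
      refine le_antisymm (Submodule.map_le_iff_le_comap.2 inf_le_right) fun y hy => ?_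
      obtain ⟨x, hxS, rfl⟩ := hT'S hy
      exact ⟨x, ⟨hxS, hy⟩, rfl⟩
    rw [← hT', ← hmap, f.finrank_map_of_injOn fun x hx => hinj x (Submodule.mem_inf.1 hx).1]
    refine finrank_le_posIndex B S inf_le_left fun x ⟨hxS, hxT⟩ hx0 => ?_
    rw [← hf x hxS]
    exact hpos _ hxT fun h => hx0 (hinj x hxS h)
  · obtain ⟨T, hTS, hT, hpos⟩ := exists_finrank_eq_posIndex B S
    rw [← hT, ← f.finrank_map_of_injOn fun x hx => hinj x (hTS hx)]
    refine finrank_le_posIndex B' _ (Submodule.map_mono hTS) ?_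
    rintro _ ⟨x, hxT, rfl⟩ hx0
    rw [hf x (hTS hxT)]
    exact hpos x hxT fun h => hx0 (by simp [h])

theorem signature_map (hinj : ∀ x ∈ S, f x = 0 → x = 0)
    (hf : ∀ x ∈ S, B' (f x) (f x) = B x x) : signature V' B' (S.map f) = signature V B S := by
  have hf' : ∀ x ∈ S, (-B') (f x) (f x) = (-B) x x := fun x hx => by simp [hf x hx]
  simp only [signature, negIndex_eq_posIndex_neg, posIndex_map hinj hf, posIndex_map hinj hf']

end Isometry

def HardLefschetz {K X : Type*} [Field K] [AddCommGroup X] [Module K X]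
    (p : ℤ → Submodule K X) (L : Module.End K X) : Prop :=
  ∀ i : ℕ, (∀ x ∈ p (-(i : ℤ)), (L ^ i) x = 0 → x = 0) ∧
    (∀ y ∈ p (i : ℤ), ∃ x ∈ p (-(i : ℤ)), (L ^ i) x = y)

def primitive {K X : Type*} [Field K] [AddCommGroup X] [Module K X]
    (p : ℤ → Submodule K X) (L : Module.End K X) (i : ℕ) : Submodule K X :=
  p (-(i : ℤ)) ⊓ LinearMap.ker (L ^ (i + 1))

section Lefschetz

variable {K X : Type*} [Field K] [AddCommGroup X] [Module K X] {p : ℤ → Submodule K X}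
  {L : Module.End K X}

theorem pow_apply_mem (hdeg : ∀ i : ℤ, ∀ x ∈ p i, L x ∈ p (i + 2)) (k : ℕ) {j : ℤ} {x : X}
    (hx : x ∈ p j) : (L ^ k) x ∈ p (j + 2 * k) := by
  induction k with
  | zero => simpa using hx
  | succ k ih =>
    rw [pow_succ', Module.End.mul_apply]
    convert hdeg _ _ ih using 2
    push_cast
    ring

theorem HardLefschetz.map_pow_eq (hdeg : ∀ i : ℤ, ∀ x ∈ p i, L x ∈ p (i + 2))
    (hL : HardLefschetz p L) (k : ℕ) : (p (-(k : ℤ))).map (L ^ k) = p k := by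
  refine le_antisymm ?_ fun y hy => (hL k).2 y hy
  rintro _ ⟨x, hx, rfl⟩
  convert pow_apply_mem hdeg k hx using 2
  ring

theorem apply_mem_of_mem_neg_add_two {i : ℕ} {x : X} (hdeg : ∀ i : ℤ, ∀ x ∈ p i, L x ∈ p (i + 2))
    (hx : x ∈ p (-((i + 2 : ℕ) : ℤ))) : L x ∈ p (-(i : ℤ)) := by
  simpa using hdeg _ x hx

theorem HardLefschetz.eq_zero_of_apply_eq_zero (hL : HardLefschetz p L) (i : ℕ) :
    ∀ x ∈ p (-((i + 2 : ℕ) : ℤ)), L x = 0 → x = 0 := fun x hx h0 =>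
  (hL (i + 2)).1 x hx (by rw [pow_succ, Module.End.mul_apply, h0, map_zero])

theorem HardLefschetz.primitive_sup_map_eq (hdeg : ∀ i : ℤ, ∀ x ∈ p i, L x ∈ p (i + 2))
    (hL : HardLefschetz p L) (i : ℕ) :
    primitive p L i ⊔ (p (-((i + 2 : ℕ) : ℤ))).map L = p (-(i : ℤ)) := by
  refine le_antisymm (sup_le inf_le_left ?_) fun z hz => ?_
  · rintro _ ⟨x, hx, rfl⟩
    exact apply_mem_of_mem_neg_add_two hdeg hx
  · -- `L^{i+1} z` has degree `i + 2`, so it is some `L^{i+2} x`; then `z - L x` is primitive.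
    have hLz := pow_apply_mem hdeg (i + 1) hz
    rw [show -(i : ℤ) + 2 * ((i + 1 : ℕ) : ℤ) = ((i + 2 : ℕ) : ℤ) by push_cast; ring] at hLz
    obtain ⟨x, hx, hLx⟩ := (hL (i + 2)).2 _ hLz
    refine Submodule.mem_sup.2 ⟨z - L x,
      Submodule.mem_inf.2 ⟨sub_mem hz (apply_mem_of_mem_neg_add_two hdeg hx), ?_⟩,
      L x, ⟨x, hx, rfl⟩, sub_add_cancel z _⟩
    rw [LinearMap.mem_ker, map_sub, ← Module.End.mul_apply, ← pow_succ, hLx, sub_self]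

theorem HardLefschetz.primitive_inf_map_eq_bot (hL : HardLefschetz p L) (i : ℕ) :
    primitive p L i ⊓ (p (-((i + 2 : ℕ) : ℤ))).map L = ⊥ := by
  refine eq_bot_iff.2 fun z hz => ?_
  rw [Submodule.mem_inf, primitive, Submodule.mem_inf] at hz
  obtain ⟨⟨-, hker⟩, x, hx, rfl⟩ := hz
  rw [LinearMap.mem_ker, ← Module.End.mul_apply, ← pow_succ] at hker
  simp [(hL (i + 2)).1 x hx hker]

theorem HardLefschetz.finrank_eq (hdeg : ∀ i : ℤ, ∀ x ∈ p i, L x ∈ p (i + 2))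
    (hL : HardLefschetz p L) (k : ℕ) : finrank K (p k) = finrank K (p (-(k : ℤ))) := by
  rw [← hL.map_pow_eq hdeg k, LinearMap.finrank_map_of_injOn _ (hL k).1]

variable [FiniteDimensional K X]

theorem HardLefschetz.finrank_eq_finrank_primitive_add (hdeg : ∀ i : ℤ, ∀ x ∈ p i, L x ∈ p (i + 2))
    (hL : HardLefschetz p L) (i : ℕ) :
    finrank K (p (-(i : ℤ))) =
      finrank K (primitive p L i) + finrank K (p (-((i + 2 : ℕ) : ℤ))) := by
  have h := Submodule.finrank_sup_add_finrank_inf_eq (primitive p L i)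
    ((p (-((i + 2 : ℕ) : ℤ))).map L)
  rw [hL.primitive_sup_map_eq hdeg, hL.primitive_inf_map_eq_bot, finrank_bot,
    LinearMap.finrank_map_of_injOn _ (hL.eq_zero_of_apply_eq_zero i)] at h
  omega

end Lefschetz

theorem HardLefschetz.signature_eq_signature_primitive_add {X : Type} [AddCommGroup X] [Module ℝ X]
    [FiniteDimensional ℝ X] {p : ℤ → Submodule ℝ X} {L : Module.End ℝ X}
    {B : X →ₗ[ℝ] X →ₗ[ℝ] ℝ} (hdeg : ∀ i : ℤ, ∀ x ∈ p i, L x ∈ p (i + 2))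
    (hL : HardLefschetz p L) (hsymm : ∀ x y : X, B x y = B y x)
    (hadj : LinearMap.IsAdjointPair B B L L) (i : ℕ) :
    signature X (B.compl₂ (L ^ i)) (p (-(i : ℤ))) =
      signature X (B.compl₂ (L ^ i)) (primitive p L i) +
        signature X (B.compl₂ (L ^ (i + 2))) (p (-((i + 2 : ℕ) : ℤ))) := by
  have hsymm' : ∀ x y : X, B.compl₂ (L ^ i) x y = B.compl₂ (L ^ i) y x := fun x y => by
    rw [LinearMap.compl₂_apply, LinearMap.compl₂_apply, hsymm, hadj.pow i]
  have horth : ∀ z ∈ primitive p L i, ∀ y ∈ (p (-((i + 2 : ℕ) : ℤ))).map L,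
      B.compl₂ (L ^ i) z y = 0 := by
    rintro z hz _ ⟨x, -, rfl⟩
    rw [LinearMap.compl₂_apply, ← Module.End.mul_apply, ← pow_succ, ← hadj.pow,
      (Submodule.mem_inf.1 hz).2, map_zero, LinearMap.zero_apply]
  have hiso : ∀ x ∈ p (-((i + 2 : ℕ) : ℤ)),
      B.compl₂ (L ^ i) (L x) (L x) = B.compl₂ (L ^ (i + 2)) x x := fun x _ => by
    rw [LinearMap.compl₂_apply, LinearMap.compl₂_apply, hadj, ← Module.End.mul_apply,
      ← Module.End.mul_apply, ← pow_succ', ← pow_succ]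
  conv_lhs => rw [← hL.primitive_sup_map_eq hdeg i]
  rw [signature_sup hsymm' (hL.primitive_inf_map_eq_bot i) horth,
    signature_map (hL.eq_zero_of_apply_eq_zero i) hiso]

section Comparison

variable {K V W : Type*} [Field K] [AddCommGroup V] [Module K V] [FiniteDimensional K V]
  [AddCommGroup W] [Module K W] [FiniteDimensional K W]
  {pV : ℤ → Submodule K V} {LV : Module.End K V} {pW : ℤ → Submodule K W} {LW : Module.End K W}

theorem finrank_primitive_zero_eq (hdegV : ∀ i : ℤ, ∀ x ∈ pV i, LV x ∈ pV (i + 2))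
    (hLV : HardLefschetz pV LV) (hdegW : ∀ i : ℤ, ∀ x ∈ pW i, LW x ∈ pW (i + 2))
    (hLW : HardLefschetz pW LW)
    (hdim : ∀ j : ℤ, finrank K (pV j) = finrank K (pW (j + 1)) + finrank K (pW (j - 1))) :
    finrank K (primitive pV LV 0) = finrank K (primitive pW LW 1) := by
  have hV₀ : finrank K (pV 0) = finrank K (primitive pV LV 0) + finrank K (pV (-2)) := by
    simpa using hLV.finrank_eq_finrank_primitive_add hdegV 0
  have hW₁ : finrank K (pW (-1)) = finrank K (primitive pW LW 1) + finrank K (pW (-3)) := by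
    simpa using hLW.finrank_eq_finrank_primitive_add hdegW 1
  have hW : finrank K (pW 1) = finrank K (pW (-1)) := by
    simpa using hLW.finrank_eq hdegW 1
  have h₀ : finrank K (pV 0) = finrank K (pW 1) + finrank K (pW (-1)) := by
    simpa using hdim 0
  have h₂ : finrank K (pV (-2)) = finrank K (pW (-1)) + finrank K (pW (-3)) := by
    rw [hdim, show (-2 : ℤ) + 1 = -1 by norm_num, show (-2 : ℤ) - 1 = -3 by norm_num]
  omega

theorem finrank_primitive_succ_eq (hdegV : ∀ i : ℤ, ∀ x ∈ pV i, LV x ∈ pV (i + 2))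
    (hLV : HardLefschetz pV LV) (hdegW : ∀ i : ℤ, ∀ x ∈ pW i, LW x ∈ pW (i + 2))
    (hLW : HardLefschetz pW LW)
    (hdim : ∀ j : ℤ, finrank K (pV j) = finrank K (pW (j + 1)) + finrank K (pW (j - 1)))
    (k : ℕ) : finrank K (primitive pV LV (k + 1)) =
      finrank K (primitive pW LW k) + finrank K (primitive pW LW (k + 2)) := by
  have hdim' (j : ℕ) : finrank K (pV (-((j + 1 : ℕ) : ℤ))) =
      finrank K (pW (-(j : ℤ))) + finrank K (pW (-((j + 2 : ℕ) : ℤ))) := by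
    rw [hdim, show -((j + 1 : ℕ) : ℤ) + 1 = -(j : ℤ) by push_cast; ring,
      show -((j + 1 : ℕ) : ℤ) - 1 = -((j + 2 : ℕ) : ℤ) by push_cast; ring]
  have hV := hLV.finrank_eq_finrank_primitive_add hdegV (k + 1)
  have hW₀ := hLW.finrank_eq_finrank_primitive_add hdegW k
  have hW₂ := hLW.finrank_eq_finrank_primitive_add hdegW (k + 2)
  have h₁ := hdim' k
  have h₃ : finrank K (pV (-((k + 1 + 2 : ℕ) : ℤ))) = finrank K (pW (-((k + 2 : ℕ) : ℤ))) +
      finrank K (pW (-((k + 2 + 2 : ℕ) : ℤ))) := hdim' (k + 2)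
  omega

end Comparison

theorem forall_signature_primitive_eq_iff {V W : Type} [AddCommGroup V] [Module ℝ V]
    [FiniteDimensional ℝ V] [AddCommGroup W] [Module ℝ W] [FiniteDimensional ℝ W]
    {pV : ℤ → Submodule ℝ V} {pW : ℤ → Submodule ℝ W} {BV : V →ₗ[ℝ] V →ₗ[ℝ] ℝ}
    {BW : W →ₗ[ℝ] W →ₗ[ℝ] ℝ} {LV : Module.End ℝ V} {LW : Module.End ℝ W}
    (hsymmV : ∀ x y : V, BV x y = BV y x) (hdegV : ∀ i : ℤ, ∀ x ∈ pV i, LV x ∈ pV (i + 2))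
    (hadjV : LinearMap.IsAdjointPair BV BV LV LV) (hLV : HardLefschetz pV LV)
    (hdegW : ∀ i : ℤ, ∀ x ∈ pW i, LW x ∈ pW (i + 2)) (hLW : HardLefschetz pW LW)
    (hdim : ∀ j : ℤ, finrank ℝ (pV j) = finrank ℝ (pW (j + 1)) + finrank ℝ (pW (j - 1)))
    {ℓ : ℕ} (hlow : ∀ i : ℤ, i < -(ℓ : ℤ) → pW i = ⊥) {ε : ℕ → ℤˣ} (hε : ∀ i, ε (i + 2) = -ε i)
    (hτW : ∀ k, signature W (BW.compl₂ (LW ^ k)) (primitive pW LW k) =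
      ε (k + 1) * finrank ℝ (primitive pW LW k)) :
    (∀ i, signature V (BV.compl₂ (LV ^ i)) (primitive pV LV i) =
      ε i * finrank ℝ (primitive pV LV i)) ↔
    ∀ i : ℕ, signature V (BV.compl₂ (LV ^ i)) (pV (-(i : ℤ))) =
      if i = 0 then 0
      else signature W (BW.compl₂ (LW ^ (i - 1)))
        (pW (-((i : ℤ) - 1)) ⊓ LinearMap.ker (LW ^ i)) := by
  have hfW (k : ℕ) : (if k + 1 = 0 then 0 else signature W (BW.compl₂ (LW ^ (k + 1 - 1)))
      (pW (-(((k + 1 : ℕ) : ℤ) - 1)) ⊓ LinearMap.ker (LW ^ (k + 1)))) =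
      ε (k + 1) * finrank ℝ (primitive pW LW k) := by
    rw [if_neg k.succ_ne_zero, Nat.add_sub_cancel,
      show ((k + 1 : ℕ) : ℤ) - 1 = k by push_cast; ring]
    exact hτW k
  refine forall_eq_iff_forall_eq_of_add_two (ℓ + 2)
    (hLV.signature_eq_signature_primitive_add hdegV hsymmV hadjV) ?_ ?_
  · rintro (_ | k)
    · rw [if_pos rfl, show (0 : ℕ) + 2 = 1 + 1 from rfl, hfW 1,
        (hε 0 : ε (1 + 1) = -ε 0), finrank_primitive_zero_eq hdegV hLV hdegW hLW hdim]
      push_cast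
      ring
    · rw [hfW k, show k + 1 + 2 = k + 2 + 1 from rfl, hfW (k + 2),
        (hε (k + 1) : ε (k + 2 + 1) = -ε (k + 1)),
        finrank_primitive_succ_eq hdegV hLV hdegW hLW hdim]
      push_cast
      ring
  · intro i hi
    have hpV : pV (-(i : ℤ)) = ⊥ := Submodule.finrank_eq_zero.1 <| by
      rw [hdim, hlow _ (by omega), hlow _ (by omega), finrank_bot]
    rw [hpV, signature_bot, if_neg (by omega), hlow _ (by omega), bot_inf_eq, signature_bot]

theorem signature_comparison_general
    (V : Type) [AddCommGroup V] [Module ℝ V] [FiniteDimensional ℝ V]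
    (W : Type) [AddCommGroup W] [Module ℝ W] [FiniteDimensional ℝ W]
    (pV : ℤ → Submodule ℝ V)
    (pW : ℤ → Submodule ℝ W)
    (BV : V →ₗ[ℝ] V →ₗ[ℝ] ℝ) (hsymmV : ∀ x y : V, BV x y = BV y x)
    (BW : W →ₗ[ℝ] W →ₗ[ℝ] ℝ)
    (LV : Module.End ℝ V) (hdegV : ∀ i : ℤ, ∀ x ∈ pV i, LV x ∈ pV (i + 2))
    (hadjV : ∀ x y : V, BV (LV x) y = BV x (LV y))
    (LW : Module.End ℝ W) (hdegW : ∀ i : ℤ, ∀ x ∈ pW i, LW x ∈ pW (i + 2))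
    -- hard Lefschetz for V and W:
    (hHLV : ∀ i : ℕ,
      (∀ x ∈ pV (-(i : ℤ)), (LV ^ i) x = 0 → x = 0) ∧
      (∀ y ∈ pV (i : ℤ), ∃ x ∈ pV (-(i : ℤ)), (LV ^ i) x = y))
    (hHLW : ∀ i : ℕ,
      (∀ x ∈ pW (-(i : ℤ)), (LW ^ i) x = 0 → x = 0) ∧
      (∀ y ∈ pW (i : ℤ), ∃ x ∈ pW (-(i : ℤ)), (LW ^ i) x = y))
    -- `gdim V = (v + v⁻¹)·gdim W`:
    (hdim : ∀ j : ℤ, Module.finrank ℝ ↥(pV j) =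
      Module.finrank ℝ ↥(pW (j + 1)) + Module.finrank ℝ ↥(pW (j - 1)))
    -- `-ℓ` is the lowest non-zero degree of `W`:
    (ℓ : ℕ) (hlow' : ∀ i : ℤ, i < -(ℓ : ℤ) → pW i = ⊥)
    -- `W` satisfies the Hodge-Riemann bilinear relations with the standard sign:
    (hHRW : ∀ i : ℕ, ∀ x ∈ pW (-(i : ℤ)) ⊓ LinearMap.ker (LW ^ (i + 1)), x ≠ 0 →
      0 < (-1 : ℝ) ^ (((i : ℤ) - (ℓ : ℤ)) / 2) * BW x ((LW ^ i) x)) :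
    -- `V` satisfies HR with the standard sign iff the signatures match:
    (∀ i : ℕ, ∀ x ∈ pV (-(i : ℤ)) ⊓ LinearMap.ker (LV ^ (i + 1)), x ≠ 0 →
      0 < (-1 : ℝ) ^ (((i : ℤ) - ((ℓ : ℤ) + 1)) / 2) * BV x ((LV ^ i) x)) ↔
    (∀ i : ℕ,
      signature V (BV.compl₂ (LV ^ i)) (pV (-(i : ℤ))) =
        if i = 0 then 0
        else signature W (BW.compl₂ (LW ^ (i - 1)))
          (pW (-((i : ℤ) - 1)) ⊓ LinearMap.ker (LW ^ i))) := by
  obtain ⟨ε, hε⟩ : ∃ ε : ℕ → ℤˣ, ∀ i, ε i = (((i : ℤ) - ((ℓ : ℤ) + 1)) / 2).negOnePow :=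
    ⟨_, fun _ => rfl⟩
  have hε_add_two (i : ℕ) : ε (i + 2) = -ε i := by
    rw [hε, hε, show ((i + 2 : ℕ) : ℤ) - (ℓ + 1) = (i - (ℓ + 1)) + 2 by push_cast; ring,
      Int.negOnePow_add_two_ediv_two]
  have hτW (k : ℕ) : signature W (BW.compl₂ (LW ^ k)) (primitive pW LW k) =
      ε (k + 1) * finrank ℝ (primitive pW LW k) := by
    refine (signature_eq_units_mul_finrank_iff _ _ _).2 fun x hx hx0 => ?_
    rw [hε, Int.cast_negOnePow, show ((k + 1 : ℕ) : ℤ) - (ℓ + 1) = k - ℓ by push_cast; ring]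
    exact hHRW k x hx hx0
  have hHRV : ∀ i, (∀ x ∈ primitive pV LV i, x ≠ 0 →
      0 < (-1 : ℝ) ^ (((i : ℤ) - ((ℓ : ℤ) + 1)) / 2) * BV x ((LV ^ i) x)) ↔
      signature V (BV.compl₂ (LV ^ i)) (primitive pV LV i) =
        ε i * finrank ℝ (primitive pV LV i) := fun i => by
    rw [signature_eq_units_mul_finrank_iff, hε, Int.cast_negOnePow]
    rfl
  exact (forall_congr' hHRV).trans (forall_signature_primitive_eq_iff hsymmV hdegV hadjV hHLV
    hdegW hHLW hdim hlow' hε_add_two hτW)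

/-- **Signature comparison lemma.** Let `V` and `W` be finite-dimensional graded real
vector spaces with graded non-degenerate symmetric forms and Lefschetz operators
satisfying hard Lefschetz.  Suppose `W` is even or odd, `gdim V = (v + v⁻¹)·gdim W`,
`-ℓ` is the lowest non-zero degree of `W` and `W` satisfies the Hodge–Riemann bilinear
relations with the standard sign.  Then `V` satisfies the Hodge–Riemann bilinear
relations with the standard sign (for its lowest degree `-(ℓ+1)`) if and only if, for all
`i ≥ 0`, the signature of the Lefschetz form on the primitive subspace
`P^{-i+1} ⊆ W^{-i+1}` equals the signature of the Lefschetz form on all of `V^{-i}`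
(with `P^1 = 0` by convention). -/
theorem signature_comparison
    (V : Type) [AddCommGroup V] [Module ℝ V] [FiniteDimensional ℝ V]
    (W : Type) [AddCommGroup W] [Module ℝ W] [FiniteDimensional ℝ W]
    (pV : ℤ → Submodule ℝ V) (hpV : DirectSum.IsInternal pV)
    (pW : ℤ → Submodule ℝ W) (hpW : DirectSum.IsInternal pW)
    (BV : V →ₗ[ℝ] V →ₗ[ℝ] ℝ) (hsymmV : ∀ x y : V, BV x y = BV y x)
    (hgrV : ∀ i j : ℤ, i + j ≠ 0 → ∀ x ∈ pV i, ∀ y ∈ pV j, BV x y = 0)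
    (hndV : ∀ x : V, (∀ y : V, BV x y = 0) → x = 0)
    (BW : W →ₗ[ℝ] W →ₗ[ℝ] ℝ) (hsymmW : ∀ x y : W, BW x y = BW y x)
    (hgrW : ∀ i j : ℤ, i + j ≠ 0 → ∀ x ∈ pW i, ∀ y ∈ pW j, BW x y = 0)
    (hndW : ∀ x : W, (∀ y : W, BW x y = 0) → x = 0)
    (LV : Module.End ℝ V) (hdegV : ∀ i : ℤ, ∀ x ∈ pV i, LV x ∈ pV (i + 2))
    (hadjV : ∀ x y : V, BV (LV x) y = BV x (LV y))
    (LW : Module.End ℝ W) (hdegW : ∀ i : ℤ, ∀ x ∈ pW i, LW x ∈ pW (i + 2))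
    (hadjW : ∀ x y : W, BW (LW x) y = BW x (LW y))
    -- hard Lefschetz for V and W:
    (hHLV : ∀ i : ℕ,
      (∀ x ∈ pV (-(i : ℤ)), (LV ^ i) x = 0 → x = 0) ∧
      (∀ y ∈ pV (i : ℤ), ∃ x ∈ pV (-(i : ℤ)), (LV ^ i) x = y))
    (hHLW : ∀ i : ℕ,
      (∀ x ∈ pW (-(i : ℤ)), (LW ^ i) x = 0 → x = 0) ∧
      (∀ y ∈ pW (i : ℤ), ∃ x ∈ pW (-(i : ℤ)), (LW ^ i) x = y))
    -- `W` is even or odd: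
    (hparityW : (∀ i : ℤ, Odd i → pW i = ⊥) ∨ (∀ i : ℤ, Even i → pW i = ⊥))
    -- `gdim V = (v + v⁻¹)·gdim W`:
    (hdim : ∀ j : ℤ, Module.finrank ℝ ↥(pV j) =
      Module.finrank ℝ ↥(pW (j + 1)) + Module.finrank ℝ ↥(pW (j - 1)))
    -- `-ℓ` is the lowest non-zero degree of `W`:
    (ℓ : ℕ) (hlow : pW (-(ℓ : ℤ)) ≠ ⊥) (hlow' : ∀ i : ℤ, i < -(ℓ : ℤ) → pW i = ⊥)
    -- `W` satisfies the Hodge-Riemann bilinear relations with the standard sign: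
    (hHRW : ∀ i : ℕ, ∀ x ∈ pW (-(i : ℤ)) ⊓ LinearMap.ker (LW ^ (i + 1)), x ≠ 0 →
      0 < (-1 : ℝ) ^ (((i : ℤ) - (ℓ : ℤ)) / 2) * BW x ((LW ^ i) x)) :
    -- `V` satisfies HR with the standard sign iff the signatures match:
    (∀ i : ℕ, ∀ x ∈ pV (-(i : ℤ)) ⊓ LinearMap.ker (LV ^ (i + 1)), x ≠ 0 →
      0 < (-1 : ℝ) ^ (((i : ℤ) - ((ℓ : ℤ) + 1)) / 2) * BV x ((LV ^ i) x)) ↔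
    (∀ i : ℕ,
      signature V (BV.compl₂ (LV ^ i)) (pV (-(i : ℤ))) =
        if i = 0 then 0
        else signature W (BW.compl₂ (LW ^ (i - 1)))
          (pW (-((i : ℤ) - 1)) ⊓ LinearMap.ker (LW ^ i))) :=
  signature_comparison_general V W pV pW BV hsymmV BW LV hdegV hadjV LW hdegW hHLV hHLW hdim ℓ hlow'
    hHRW
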